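/- arXiv:1307.8259 — 11 statements merged into one kernel-verified Lean document; each statement's English description precedes it below -/
import Mathlib

section
/- If T is a subsemigroup of a semigroup S with S−T finite, and S is finitely generated, then T is finitely generated. -/
namespace Stmt1Aux

variable {S : Type*} [Semigroup S]

/-- Product of a word over `S`, computed in the monoid `WithOne S`. -/
def pw (w : List S) : WithOne S := (w.map (fun s => (s : WithOne S))).prod

@[simp] lemma pw_nil : pw ([] : List S) = 1 := rfl

lemma pw_cons (x : S) (w : List S) : pw (x :: w) = (x : WithOne S) * pw w := by
  simp [pw]

lemma pw_append (w₁ w₂ : List S) : pw (w₁ ++ w₂) = pw w₁ * pw w₂ := by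
  simp [pw]

lemma pw_ne_nil {w : List S} (h : w ≠ []) : ∃ s : S, pw w = (s : WithOne S) := by
  induction w with
  | nil => exact absurd rfl h
  | cons x r ih =>
    rcases eq_or_ne r [] with rfl | hr
    · exact ⟨x, by simp [pw]⟩
    · obtain ⟨s, hs⟩ := ih hr
      exact ⟨x * s, by rw [pw_cons, hs, WithOne.coe_mul]⟩

/-- The finite generating set for the large subsemigroup `T`. -/
def Yset (T : Subsemigroup S) (X : Set S) : Set S :=
  (X ∪ Set.image2 (· * ·) ((T : Set S)ᶜ) X ∪ Set.image2 (· * ·) X ((T : Set S)ᶜ)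
    ∪ Set.image2 (· * ·) (Set.image2 (· * ·) ((T : Set S)ᶜ) X) ((T : Set S)ᶜ)) ∩ (T : Set S)

lemma Yset_subset (T : Subsemigroup S) (X : Set S) : Yset T X ⊆ (T : Set S) :=
  Set.inter_subset_right

lemma Yset_finite (T : Subsemigroup S) {X : Set S} (hX : X.Finite)
    (hA : ((T : Set S)ᶜ).Finite) : (Yset T X).Finite :=
  Set.Finite.inter_of_left
    (((hX.union (hA.image2 _ hX)).union (hX.image2 _ hA)).union
      ((hA.image2 _ hX).image2 _ hA)) _

lemma main (T : Subsemigroup S) (X : Set S) :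
    ∀ n (w : List S), w.length ≤ n → w ≠ [] → (∀ x ∈ w, x ∈ X) →
      ∀ t, t ∈ T → pw w = (t : WithOne S) → t ∈ Subsemigroup.closure (Yset T X) := by
  intro n
  induction n with
  | zero =>
    intro w hw hne
    exact absurd (List.length_eq_zero_iff.mp (Nat.le_zero.mp hw)) hne
  | succ n ih =>
    intro w hwlen hne hXw t ht hpw
    classical
    have hm1 : 0 < w.length := List.length_pos_iff.mpr hne
    set Q : ℕ → Prop := fun j => ∃ u, u ∈ T ∧ pw (w.drop j) = (u : WithOne S) with hQdef
    set i := Nat.findGreatest Q (w.length - 1) with hidef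
    have hQ0 : Q 0 := ⟨t, ht, by simpa using hpw⟩
    have hQi : Q i := Nat.findGreatest_spec (Nat.zero_le _) hQ0
    have him : i ≤ w.length - 1 := Nat.findGreatest_le _
    have hilt : i < w.length := by omega
    obtain ⟨s, hsT, hs⟩ := hQi
    have hdrop : w.drop i = w[i] :: w.drop (i + 1) := List.drop_eq_getElem_cons hilt
    have hxX : w[i] ∈ X := hXw _ (List.getElem_mem _)
    -- Step A: the maximal suffix `s` lies in `Yset`, and has a restricted form.
    have hsform : s = w[i] ∨ ∃ u, u ∉ T ∧ s = w[i] * u := by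
      rcases eq_or_ne (w.drop (i + 1)) [] with hr | hr
      · left
        have h1 : pw (w.drop i) = (w[i] : WithOne S) := by
          rw [hdrop, hr, pw_cons, pw_nil, mul_one]
        exact WithOne.coe_inj.mp (hs.symm.trans h1)
      · right
        obtain ⟨u, hu⟩ := pw_ne_nil hr
        have hi1 : i + 1 < w.length := by
          have hpos : 0 < (w.drop (i + 1)).length := List.length_pos_iff.mpr hr
          rw [List.length_drop] at hpos
          omega
        have hnQ : ¬ Q (i + 1) :=
          Nat.findGreatest_is_greatest (Nat.lt_succ_self i) (by omega)
        have huT : u ∉ T := fun huT => hnQ ⟨u, huT, hu⟩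
        refine ⟨u, huT, ?_⟩
        have h2 : (s : WithOne S) = ((w[i] * u : S) : WithOne S) := by
          rw [WithOne.coe_mul, ← hu, ← pw_cons, ← hdrop, hs]
        exact WithOne.coe_inj.mp h2
    have hsY : s ∈ Yset T X := by
      rcases hsform with h | ⟨u, huT, hsu⟩
      · exact ⟨Or.inl (Or.inl (Or.inl (h ▸ hxX))), hsT⟩
      · exact ⟨Or.inl (Or.inr (Set.mem_image2.mpr ⟨w[i], hxX, u, huT, hsu.symm⟩)), hsT⟩
    -- Step B: split off the prefix before the maximal suffix.
    rcases Nat.eq_zero_or_pos i with hi0 | hip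
    · have hts : t = s := by
        apply WithOne.coe_inj.mp
        rw [← hpw, ← hs, hi0, List.drop_zero]
      rw [hts]
      exact Subsemigroup.subset_closure hsY
    · have htlen : (w.take i).length = i := by rw [List.length_take]; omega
      have htake : (w.take i) ≠ [] := by
        intro h
        rw [h] at htlen
        simp at htlen
        omega
      obtain ⟨p, hp⟩ := pw_ne_nil htake
      have hts : t = p * s := by
        apply WithOne.coe_inj.mp
        rw [WithOne.coe_mul, ← hp, ← hs, ← pw_append, List.take_append_drop, hpw]
      by_cases hpT : p ∈ T
      · have hpcl : p ∈ Subsemigroup.closure (Yset T X) := by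
          refine ih (w.take i) (by omega) htake ?_ p hpT hp
          exact fun x hx => hXw x (List.take_subset _ _ hx)
        rw [hts]
        exact mul_mem hpcl (Subsemigroup.subset_closure hsY)
      · rcases hsform with hse | ⟨u, huT, hsu⟩
        · refine Subsemigroup.subset_closure ⟨Or.inl (Or.inl (Or.inr ?_)), ht⟩
          exact Set.mem_image2.mpr ⟨p, hpT, w[i], hxX, by rw [← hse, ← hts]⟩
        · refine Subsemigroup.subset_closure ⟨Or.inr ?_, ht⟩
          refine Set.mem_image2.mpr ⟨p * w[i], Set.mem_image2.mpr ⟨p, hpT, w[i], hxX, rfl⟩,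
            u, huT, ?_⟩
          rw [mul_assoc, ← hsu, ← hts]

lemma repr {X : Set S} {s : S} (hs : s ∈ Subsemigroup.closure X) :
    ∃ w : List S, w ≠ [] ∧ (∀ x ∈ w, x ∈ X) ∧ pw w = (s : WithOne S) := by
  induction hs using Subsemigroup.closure_induction with
  | mem x hx => exact ⟨[x], by simp, by simp [hx], by simp [pw]⟩
  | mul x y hx hy ihx ihy =>
    obtain ⟨w₁, h₁, hX₁, hp₁⟩ := ihx
    obtain ⟨w₂, h₂, hX₂, hp₂⟩ := ihy
    exact ⟨w₁ ++ w₂, by simp [h₁], fun x hx => (List.mem_append.mp hx).elim (hX₁ x) (hX₂ x),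
      by rw [pw_append, hp₁, hp₂, WithOne.coe_mul]⟩

end Stmt1Aux

/-- If `T` is a subsemigroup of a semigroup `S` with finite complement, and `S` is
finitely generated, then `T` is finitely generated. -/
theorem stmt1 {S : Type*} [Semigroup S] (T : Subsemigroup S)
    (hfin : ((T : Set S)ᶜ).Finite)
    (hfg : ∃ X : Set S, X.Finite ∧ Subsemigroup.closure X = ⊤) :
    ∃ Y : Set S, Y.Finite ∧ Subsemigroup.closure Y = T := by
  obtain ⟨X, hXfin, hXtop⟩ := hfg
  refine ⟨Stmt1Aux.Yset T X, Stmt1Aux.Yset_finite T hXfin hfin, le_antisymm ?_ ?_⟩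
  · exact Subsemigroup.closure_le.mpr (Stmt1Aux.Yset_subset T X)
  · intro t ht
    have hcl : t ∈ Subsemigroup.closure X := hXtop ▸ Subsemigroup.mem_top t
    obtain ⟨w, hne, hXw, hpw⟩ := Stmt1Aux.repr hcl
    exact Stmt1Aux.main T X w.length w le_rfl hne hXw t ht hpw
end

section
/- If T is a periodic semigroup and S is a semigroup containing T as a subsemigroup with S−T finite, then S is periodic. -/
/-- `spow x k` is the power `x^(k+1)` of an element of a semigroup. -/
def spow {S : Type*} [Mul S] (x : S) : ℕ → S
  | 0 => x
  | k + 1 => spow x k * x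

lemma spow_add {S : Type*} [Semigroup S] (x : S) (a b : ℕ) :
    spow x (a + b + 1) = spow x a * spow x b := by
  induction b with
  | zero => simp [spow]
  | succ b ih =>
    show spow x (a + b + 1) * x = _
    rw [ih, spow, mul_assoc]

lemma spow_spow {S : Type*} [Semigroup S] (x : S) (k m : ℕ) :
    spow (spow x k) m = spow x (k + m * (k + 1)) := by
  induction m with
  | zero => simp [spow]
  | succ m ih =>
    show spow (spow x k) m * spow x k = _
    rw [ih, ← spow_add]
    ring_nf

/-- If `T` is a periodic semigroup and `S` contains `T` as a subsemigroup with finite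
complement, then `S` is periodic. -/
theorem stmt2 {S : Type*} [Semigroup S] (T : Subsemigroup S)
    (hfin : ((T : Set S)ᶜ).Finite)
    (hper : ∀ t ∈ T, ∃ m n : ℕ, m < n ∧ spow t m = spow t n) :
    ∀ s : S, ∃ m n : ℕ, m < n ∧ spow s m = spow s n := by
  intro s
  by_cases hinj : Function.Injective (spow s)
  · -- then some power lies in T
    have : ∃ k, spow s k ∈ T := by
      by_contra h
      push_neg at h
      have : Set.range (spow s) ⊆ ((T : Set S)ᶜ) := by
        rintro _ ⟨k, rfl⟩; exact h k
      have hfin' : (Set.range (spow s)).Finite := hfin.subset this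
      exact Set.infinite_range_of_injective hinj hfin'
    obtain ⟨k, hk⟩ := this
    obtain ⟨m, n, hmn, heq⟩ := hper _ hk
    refine ⟨k + m * (k + 1), k + n * (k + 1), ?_, ?_⟩
    · have := Nat.succ_pos k
      nlinarith
    · rw [← spow_spow, ← spow_spow, heq]
  · simp only [Function.Injective, not_forall] at hinj
    obtain ⟨m, n, heq, hne⟩ := hinj
    rcases lt_or_gt_of_ne hne with h | h
    · exact ⟨m, n, h, heq⟩
    · exact ⟨n, m, h, heq.symm⟩
end

section
/- If T is a locally finite semigroup and S is a semigroup containing T with S−T finite, then S is locally finite. -/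
/-!
Let `C` be the finite complement of `T` and `X` a finite set. Every element of `T` that is a
product of elements of `X` can be cut into factors `c a` or `c a d` lying in `T`, where `a ∈ X`
and `c, d ∈ C` are optional. There are finitely many such factors, so by local finiteness of `T`
they generate a finite subsemigroup, and `closure X` lies in its union with `C`.
-/

open scoped Pointwise

namespace Subsemigroup

theorem closure_induction_left {M : Type*} [Semigroup M] {s : Set M}
    {p : (x : M) → x ∈ closure s → Prop}
    (mem : ∀ x (hx : x ∈ s), p x (subset_closure hx))
    (mul_left : ∀ x (hx : x ∈ s) y hy, p y hy → p (x * y) (mul_mem (subset_closure hx) hy))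
    {x : M} (hx : x ∈ closure s) : p x hx := by
  suffices h : ∀ x (hx : x ∈ closure s), p x hx ∧ ∀ y hy, p y hy → p (x * y) (mul_mem hx hy) from
    (h x hx).1
  intro x hx
  induction hx using closure_induction with
  | mem x hx => exact ⟨mem x hx, mul_left x hx⟩
  | mul x y _ hy' hx hy =>
    exact ⟨hx.2 y hy' hy.1, fun z hz hpz => by
      convert hx.2 _ _ (hy.2 z hz hpz) using 1; rw [mul_assoc]⟩

variable {S : Type*} [Semigroup S] (T : Subsemigroup S) (X : Set S)

def largeGenerators : Set S :=
  T ∩ (X ∪ (T : Set S)ᶜ * X ∪ (X ∪ (T : Set S)ᶜ * X) * (T : Set S)ᶜ)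

theorem largeGenerators_subset : largeGenerators T X ⊆ T :=
  Set.inter_subset_left

variable {T X}

theorem largeGenerators_finite (hT : ((T : Set S)ᶜ).Finite) (hX : X.Finite) :
    (largeGenerators T X).Finite :=
  Set.Finite.inter_of_right
    ((hX.union (hT.mul hX)).union ((hX.union (hT.mul hX)).mul hT)) _

/-- Strengthened to the left multiples `c u` with `c ∉ T`, so that left induction on `u`
goes through. -/
theorem mem_closure_largeGenerators_of_mul_left {u : S} (hu : u ∈ closure X) :
    ∀ y ∈ insert u ((· * u) '' (T : Set S)ᶜ), y ∈ T → y ∈ closure (largeGenerators T X) := by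
  induction hu using closure_induction_left with
  | mem a ha =>
    rintro y (rfl | ⟨c, hc, rfl⟩) hyT
    · exact subset_closure ⟨hyT, .inl (.inl ha)⟩
    · exact subset_closure ⟨hyT, .inl (.inr (Set.mul_mem_mul hc ha))⟩
  | mul_left a ha w _ ih =>
    intro y hy hyT
    obtain ⟨b, hb, rfl⟩ : ∃ b ∈ X ∪ (T : Set S)ᶜ * X, y = b * w := by
      rcases hy with rfl | ⟨c, hc, rfl⟩
      · exact ⟨a, .inl ha, rfl⟩
      · exact ⟨c * a, .inr (Set.mul_mem_mul hc ha), (mul_assoc c a w).symm⟩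
    by_cases hbT : b ∈ T
    · by_cases hwT : w ∈ T
      · exact mul_mem (subset_closure ⟨hbT, .inl hb⟩) (ih w (Set.mem_insert w _) hwT)
      · exact subset_closure ⟨hyT, .inr (Set.mul_mem_mul hb hwT)⟩
    · exact ih (b * w) (Set.mem_insert_of_mem w ⟨b, hbT, rfl⟩) hyT

theorem closure_inter_subset_closure_largeGenerators :
    (closure X : Set S) ∩ T ⊆ closure (largeGenerators T X) :=
  fun u ⟨hu, huT⟩ => mem_closure_largeGenerators_of_mul_left hu u (Set.mem_insert u _) huT

end Subsemigroup

/-- If `T` is a locally finite semigroup and `S` contains `T` as a subsemigroup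
with finite complement, then `S` is locally finite. -/
theorem stmt3 {S : Type*} [Semigroup S] (T : Subsemigroup S)
    (hfin : ((T : Set S)ᶜ).Finite)
    (hlf : ∀ X : Set S, X ⊆ (T : Set S) → X.Finite →
      ((Subsemigroup.closure X : Subsemigroup S) : Set S).Finite) :
    ∀ X : Set S, X.Finite → ((Subsemigroup.closure X : Subsemigroup S) : Set S).Finite := by
  intro X hX
  have hcover : (Subsemigroup.closure X : Set S) ⊆
      Subsemigroup.closure (Subsemigroup.largeGenerators T X) ∪ (T : Set S)ᶜ := by
    intro u hu
    by_cases huT : u ∈ T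
    · exact .inl (Subsemigroup.closure_inter_subset_closure_largeGenerators ⟨hu, huT⟩)
    · exact .inr huT
  exact ((hlf _ (Subsemigroup.largeGenerators_subset T X)
    (Subsemigroup.largeGenerators_finite hfin hX)).union hfin).subset hcover
end

section
/- Let S be a semigroup and T a subsemigroup with S−T finite. Then every left ideal of T is large in T if every left ideal of S is large in S; more precisely, if every left ideal of S has finite complement in S, then every left ideal of T has finite complement in T. -/
/-- If every (nonempty) left ideal of `S` has finite complement in `S`, and `T` is a
subsemigroup of `S` with finite complement, then every (nonempty) left ideal of `T`
has finite complement in `T`. -/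
theorem stmt4 {S : Type*} [Semigroup S] (T : Subsemigroup S)
    (hfin : ((T : Set S)ᶜ).Finite)
    (hS : ∀ I : Set S, I.Nonempty → (∀ s : S, ∀ i ∈ I, s * i ∈ I) → (Iᶜ).Finite) :
    ∀ J : Set S, J ⊆ (T : Set S) → J.Nonempty →
      (∀ t ∈ T, ∀ j ∈ J, t * j ∈ J) → ((T : Set S) \ J).Finite := by
  rintro J hJT ⟨t, htJ⟩ hideal
  set I : Set S := insert t (Set.range (fun s => s * t)) with hI
  have hIfin : (Iᶜ).Finite := by
    apply hS I ⟨t, Or.inl rfl⟩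
    rintro s i (rfl | ⟨s', rfl⟩)
    · exact Or.inr ⟨s, rfl⟩
    · exact Or.inr ⟨s * s', by simp [mul_assoc]⟩
  have hsub : (T : Set S) \ J ⊆ Iᶜ ∪ (fun s => s * t) '' ((T : Set S)ᶜ) := by
    rintro x ⟨hxT, hxJ⟩
    by_cases hxI : x ∈ I
    · rcases hxI with rfl | ⟨s, rfl⟩
      · exact absurd htJ hxJ
      · right
        refine ⟨s, fun hsT => hxJ ?_, rfl⟩
        exact hideal s hsT t htJ
    · exact Or.inl hxI
  exact (hIfin.union (hfin.image _)).subset hsub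
end

section
/- The free monogenic semigroup T = {x, x², x³, ...} is not co-hopfian: the map x^m ↦ x^{2m} is an injective non-surjective endomorphism. But the semigroup S presented by ⟨x, y | y² = xy = yx = x²⟩ equals T ∪ {y}, and every injective endomorphism of S is bijective (S is co-hopfian). -/
/-- The semigroup `S = ⟨x, y | y² = xy = yx = x²⟩`, which equals `T ∪ {y}` where
`T = {x, x², x³, ...}` is the free monogenic semigroup: elements are the powers
`x^n` (`pow n`) together with `y`. -/
inductive Sfm
  | pow : ℕ+ → Sfm
  | y : Sfm

/-- The weight of an element: `x^n` has weight `n` and `y` has weight `1`;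
the product of any two elements is `x` to the sum of their weights. -/
def Sfm.wt : Sfm → ℕ+
  | .pow n => n
  | .y => 1

instance : Mul Sfm := ⟨fun a b => Sfm.pow (a.wt + b.wt)⟩

instance : Semigroup Sfm where
  mul_assoc a b c := by
    show Sfm.pow ((Sfm.pow (a.wt + b.wt)).wt + c.wt)
        = Sfm.pow (a.wt + (Sfm.pow (b.wt + c.wt)).wt)
    simp [Sfm.wt, add_assoc]

/-!
Every element of `S` has a weight (`x^n ↦ n`, `y ↦ 1`) and the product of two elements is `x`
raised to the sum of their weights. For an endomorphism `φ`, the weight of `φ (x^n)` is therefore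
`n` times that of `φ x`, and comparing `φ (y²) = φ (x²)` shows that `φ y` has the same weight
as `φ x`. If that common weight `c` were not `1`, both `φ x` and `φ y` would be `x^c`, so an
injective `φ` preserves weights. Each weight class is finite (it is `{x^n}` or `{x, y}`), and an
injective self-map of a finite set is onto.
-/

open Function Set

theorem Function.Injective.surjective_of_finite_fibers {α β : Type*} {w : α → β}
    (hw : ∀ b, (w ⁻¹' {b}).Finite) {f : α → α} (hf : Injective f) (hfw : ∀ a, w (f a) = w a) :
    Surjective f := by
  intro t
  have hmaps : MapsTo f (w ⁻¹' {w t}) (w ⁻¹' {w t}) := fun a ha => by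
    simpa only [mem_preimage, hfw] using ha
  obtain ⟨a, -, rfl⟩ := ((hw (w t)).injOn_iff_bijOn_of_mapsTo hmaps).1 hf.injOn |>.surjOn rfl
  exact ⟨a, rfl⟩

namespace Sfm

@[simp]
theorem wt_pow (n : ℕ+) : (pow n).wt = n := rfl

@[simp]
theorem wt_y : y.wt = 1 := rfl

@[simp]
theorem wt_mul (a b : Sfm) : (a * b).wt = a.wt + b.wt := rfl

theorem pow_injective : Injective pow := fun _ _ h => by injection h

theorem range_pow_union_singleton_y : range pow ∪ {y} = univ := by
  ext (_ | _) <;> simp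

theorem eq_pow_wt_of_wt_ne_one {a : Sfm} (h : a.wt ≠ 1) : a = pow a.wt := by
  cases a
  · rfl
  · exact absurd wt_y h

theorem finite_wt_preimage (n : ℕ+) : (wt ⁻¹' {n}).Finite := by
  refine ((finite_singleton y).insert (pow n)).subset ?_
  rintro (_ | _) h <;> simp_all

section MulHom

variable (φ : Sfm →ₙ* Sfm)

theorem wt_map_pow (n : ℕ+) : (φ (pow n)).wt = n * (φ (pow 1)).wt := by
  induction n using PNat.recOn with
  | one => rw [one_mul]
  | succ n ih =>
    change (φ (pow n * pow 1)).wt = _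
    rw [map_mul, wt_mul, ih, add_one_mul]

theorem wt_map_y : (φ y).wt = (φ (pow 1)).wt := by
  have h : (φ y).wt + (φ y).wt = (φ (pow 1)).wt + (φ (pow 1)).wt := by
    rw [← wt_mul, ← wt_mul, ← map_mul, ← map_mul]
    rfl
  have h' := congrArg PNat.val h
  simp only [PNat.add_coe] at h'
  exact PNat.coe_injective (by omega)

variable {φ}

theorem wt_map_pow_one_of_injective (hφ : Injective φ) : (φ (pow 1)).wt = 1 := by
  by_contra h
  have hy : (φ y).wt ≠ 1 := wt_map_y φ ▸ h
  have : φ (pow 1) = φ y := by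
    rw [eq_pow_wt_of_wt_ne_one h, eq_pow_wt_of_wt_ne_one hy, wt_map_y]
  exact Sfm.noConfusion (hφ this)

theorem wt_map_of_injective (hφ : Injective φ) (a : Sfm) : (φ a).wt = a.wt := by
  cases a with
  | pow n => rw [wt_map_pow, wt_map_pow_one_of_injective hφ, mul_one, wt_pow]
  | y => rw [wt_map_y, wt_map_pow_one_of_injective hφ, wt_y]

theorem surjective_of_injective (hφ : Injective φ) : Surjective φ :=
  hφ.surjective_of_finite_fibers finite_wt_preimage (wt_map_of_injective hφ)

end MulHom

end Sfm

theorem PNat.two_mul_ne_one (n : ℕ+) : 2 * n ≠ 1 := by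
  intro h
  have := congrArg PNat.val h
  simp only [PNat.mul_coe, PNat.val_ofNat] at this
  omega

/-- The free monogenic semigroup `T = {x, x², ...}` is not co-hopfian
(`x^m ↦ x^{2m}` is an injective non-surjective endomorphism), but the semigroup
`S = ⟨x, y | y² = xy = yx = x²⟩ = T ∪ {y}` is co-hopfian: every injective
endomorphism of `S` is bijective. -/
theorem stmt11 :
    ((∀ m n : ℕ+, Sfm.pow m * Sfm.pow n = Sfm.pow (m + n)) ∧
      Function.Injective Sfm.pow ∧
      (Set.univ : Set Sfm) = Set.range Sfm.pow ∪ {Sfm.y}) ∧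
    (∃ f : ℕ+ → ℕ+, (∀ m n : ℕ+, f (m + n) = f m + f n) ∧
      Function.Injective f ∧ ¬ Function.Surjective f) ∧
    (∀ φ : Sfm → Sfm, Function.Injective φ →
      (∀ a b : Sfm, φ (a * b) = φ a * φ b) → Function.Bijective φ) := by
  refine ⟨⟨fun _ _ => rfl, Sfm.pow_injective, Sfm.range_pow_union_singleton_y.symm⟩,
    ⟨(2 * ·), fun m n => mul_add 2 m n, fun _ _ => mul_left_cancel, ?_⟩,
    fun φ hφ hmul => ⟨hφ, Sfm.surjective_of_injective (φ := ⟨φ, hmul⟩) hφ⟩⟩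
  intro hsurj
  obtain ⟨n, hn⟩ := hsurj 1
  exact n.two_mul_ne_one hn
end

section
/- Let T be a finitely generated semigroup and S a semigroup containing T with S−T finite and S ≠ T. Then for any semigroup endomorphism φ of S, the image φ(T) is not equal to S. -/
open scoped Classical

namespace Stmt12Aux

instance optionFinite {α : Type*} [Finite α] : Finite (Option α) :=
  Finite.of_equiv _ (Equiv.optionEquivSumPUnit.{0} α).symm

variable {S : Type*} [Semigroup S] (T : Subsemigroup S)

/-- Syntactic equivalence with respect to the subsemigroup `T`:
two elements are equivalent if they have the same `T`-membership under all
(one- or two-sided) multiplicative contexts. -/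
def Sig (s s' : S) : Prop :=
  (s ∈ T ↔ s' ∈ T) ∧ (∀ q, s * q ∈ T ↔ s' * q ∈ T) ∧
    (∀ p, p * s ∈ T ↔ p * s' ∈ T) ∧ (∀ p q, p * (s * q) ∈ T ↔ p * (s' * q) ∈ T)

theorem sig_refl (s : S) : Sig T s s :=
  ⟨Iff.rfl, fun _ => Iff.rfl, fun _ => Iff.rfl, fun _ _ => Iff.rfl⟩

theorem sig_mul {a a' b b' : S} (ha : Sig T a a') (hb : Sig T b b') :
    Sig T (a * b) (a' * b') := by
  obtain ⟨ha1, ha2, ha3, ha4⟩ := ha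
  obtain ⟨hb1, hb2, hb3, hb4⟩ := hb
  refine ⟨?_, ?_, ?_, ?_⟩
  · exact (ha2 b).trans (hb3 a')
  · intro q
    have h1 : a * b * q = a * (b * q) := mul_assoc ..
    have h2 : a' * b' * q = a' * (b' * q) := mul_assoc ..
    rw [h1, h2]
    exact (ha2 (b * q)).trans (hb4 a' q)
  · intro p
    have h1 : p * (a * b) = p * a * b := (mul_assoc ..).symm
    have h2 : p * (a' * b') = p * a' * b' := (mul_assoc ..).symm
    rw [h1, h2]
    calc p * a * b ∈ T ↔ p * a' * b ∈ T := by
          have e1 : p * a * b = p * (a * b) := mul_assoc ..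
          have e2 : p * a' * b = p * (a' * b) := mul_assoc ..
          rw [e1, e2]; exact ha4 p b
      _ ↔ p * a' * b' ∈ T := hb3 (p * a')
  · intro p q
    have e1 : p * (a * b * q) = p * (a * (b * q)) := by rw [mul_assoc a b q]
    have e2 : p * (a' * (b * q)) = p * a' * (b * q) := (mul_assoc ..).symm
    have e3 : p * (a' * b' * q) = p * a' * (b' * q) := by
      rw [mul_assoc a' b' q, mul_assoc p a' (b' * q)]
    rw [e1, e3]
    calc p * (a * (b * q)) ∈ T ↔ p * (a' * (b * q)) ∈ T := ha4 p (b * q)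
      _ ↔ p * a' * (b' * q) ∈ T := by rw [e2]; exact hb4 (p * a') q

/-- The finite-valued invariant attached to an element `s`:
(1) `s` itself if it lies in the complement of `T`;
(2) for each `f ∉ T`, the value `f * s` if it lies in the complement of `T`;
(3) for each `f ∉ T`, the value `s * f` if it lies in the complement of `T`;
(4) for `f, f' ∉ T`, whether `f * (s * f') ∈ T`. -/
noncomputable def invr (s : S) :
    Option ↥((T : Set S)ᶜ) × ((↥((T : Set S)ᶜ) → Option ↥((T : Set S)ᶜ)) ×
      ((↥((T : Set S)ᶜ) → Option ↥((T : Set S)ᶜ)) ×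
        (↥((T : Set S)ᶜ) → ↥((T : Set S)ᶜ) → Bool))) :=
  ⟨if h : s ∈ (T : Set S)ᶜ then some ⟨s, h⟩ else none,
   fun f => if h : ((f : S) * s) ∈ (T : Set S)ᶜ then some ⟨_, h⟩ else none,
   fun f => if h : (s * (f : S)) ∈ (T : Set S)ᶜ then some ⟨_, h⟩ else none,
   fun f f' => if ((f : S) * (s * (f' : S))) ∈ T then true else false⟩

theorem mem_of_not_compl {s : S} (h : ¬ s ∈ (T : Set S)ᶜ) : s ∈ T := by
  simpa using h

theorem notMem_of_compl {s : S} (h : s ∈ (T : Set S)ᶜ) : ¬ s ∈ T := by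
  simpa using h

/-- Equality of the invariants implies syntactic equivalence. -/
theorem invr_eq_sig {s s' : S} (e : invr T s = invr T s') : Sig T s s' := by
  have e0 := congrArg Prod.fst e
  have e1 := congrArg (fun z => z.2.1) e
  have e2 := congrArg (fun z => z.2.2.1) e
  have e3 := congrArg (fun z => z.2.2.2) e
  simp only [invr] at e0 e1 e2 e3
  by_cases hs : s ∈ (T : Set S)ᶜ
  · -- then also s' ∈ Tᶜ and s = s'
    by_cases hs' : s' ∈ (T : Set S)ᶜ
    · rw [dif_pos hs, dif_pos hs'] at e0
      have : s = s' := congrArg Subtype.val (Option.some.inj e0)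
      rw [this]; exact sig_refl T s'
    · rw [dif_pos hs, dif_neg hs'] at e0
      exact absurd e0 (by simp)
  · by_cases hs' : s' ∈ (T : Set S)ᶜ
    · rw [dif_neg hs, dif_pos hs'] at e0
      exact absurd e0 (by simp)
    -- main case: s, s' ∈ T
    have hsT : s ∈ T := mem_of_not_compl T hs
    have hs'T : s' ∈ T := mem_of_not_compl T hs'
    -- extractors for the function components
    have E1 : ∀ f : ↥((T : Set S)ᶜ),
        (if h : ((f : S) * s) ∈ (T : Set S)ᶜ then some (⟨_, h⟩ : ↥((T : Set S)ᶜ)) else none)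
          = (if h : ((f : S) * s') ∈ (T : Set S)ᶜ then some ⟨_, h⟩ else none) :=
      fun f => congrFun e1 f
    have E2 : ∀ f : ↥((T : Set S)ᶜ),
        (if h : (s * (f : S)) ∈ (T : Set S)ᶜ then some (⟨_, h⟩ : ↥((T : Set S)ᶜ)) else none)
          = (if h : (s' * (f : S)) ∈ (T : Set S)ᶜ then some ⟨_, h⟩ else none) :=
      fun f => congrFun e2 f
    have E3 : ∀ f f' : ↥((T : Set S)ᶜ),
        (if ((f : S) * (s * (f' : S))) ∈ T then true else false)
          = (if ((f : S) * (s' * (f' : S))) ∈ T then true else false) :=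
      fun f f' => congrFun (congrFun e3 f) f'
    -- a helper consequence of E2: either both `s*q, s'*q ∈ T`, or they are equal elements of Tᶜ
    have right : ∀ q, q ∈ (T : Set S)ᶜ →
        (s * q ∈ T ∧ s' * q ∈ T) ∨ (s * q = s' * q ∧ s * q ∉ T) := by
      intro q hq
      have := E2 ⟨q, hq⟩
      by_cases h1 : (s * q) ∈ (T : Set S)ᶜ
      · by_cases h2 : (s' * q) ∈ (T : Set S)ᶜ
        · rw [dif_pos h1, dif_pos h2] at this
          exact Or.inr ⟨congrArg Subtype.val (Option.some.inj this), notMem_of_compl T h1⟩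
        · rw [dif_pos h1, dif_neg h2] at this
          exact absurd this (by simp)
      · by_cases h2 : (s' * q) ∈ (T : Set S)ᶜ
        · rw [dif_neg h1, dif_pos h2] at this
          exact absurd this (by simp)
        · exact Or.inl ⟨mem_of_not_compl T h1, mem_of_not_compl T h2⟩
    have left : ∀ p, p ∈ (T : Set S)ᶜ →
        (p * s ∈ T ∧ p * s' ∈ T) ∨ (p * s = p * s' ∧ p * s ∉ T) := by
      intro p hp
      have := E1 ⟨p, hp⟩
      by_cases h1 : (p * s) ∈ (T : Set S)ᶜ
      · by_cases h2 : (p * s') ∈ (T : Set S)ᶜ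
        · rw [dif_pos h1, dif_pos h2] at this
          exact Or.inr ⟨congrArg Subtype.val (Option.some.inj this), notMem_of_compl T h1⟩
        · rw [dif_pos h1, dif_neg h2] at this
          exact absurd this (by simp)
      · by_cases h2 : (p * s') ∈ (T : Set S)ᶜ
        · rw [dif_neg h1, dif_pos h2] at this
          exact absurd this (by simp)
        · exact Or.inl ⟨mem_of_not_compl T h1, mem_of_not_compl T h2⟩
    refine ⟨iff_of_true hsT hs'T, ?_, ?_, ?_⟩
    · -- right contexts
      intro q
      by_cases hq : q ∈ (T : Set S)ᶜ
      · rcases right q hq with ⟨h1, h2⟩ | ⟨heq, _⟩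
        · exact iff_of_true h1 h2
        · rw [heq]
      · exact iff_of_true (mul_mem hsT (mem_of_not_compl T hq))
          (mul_mem hs'T (mem_of_not_compl T hq))
    · -- left contexts
      intro p
      by_cases hp : p ∈ (T : Set S)ᶜ
      · rcases left p hp with ⟨h1, h2⟩ | ⟨heq, _⟩
        · exact iff_of_true h1 h2
        · rw [heq]
      · exact iff_of_true (mul_mem (mem_of_not_compl T hp) hsT)
          (mul_mem (mem_of_not_compl T hp) hs'T)
    · -- two-sided contexts
      intro p q
      by_cases hp : p ∈ (T : Set S)ᶜ
      · by_cases hq : q ∈ (T : Set S)ᶜ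
        · -- use the boolean matrix
          have := E3 ⟨p, hp⟩ ⟨q, hq⟩
          by_cases h3 : p * (s * q) ∈ T
          · by_cases h4 : p * (s' * q) ∈ T
            · exact iff_of_true h3 h4
            · rw [if_pos h3, if_neg h4] at this; exact absurd this (by simp)
          · by_cases h4 : p * (s' * q) ∈ T
            · rw [if_neg h3, if_pos h4] at this; exact absurd this (by simp)
            · exact iff_of_false h3 h4
        · -- q ∈ T; use `left` data
          have hqT : q ∈ T := mem_of_not_compl T hq
          rcases left p hp with ⟨h1, h2⟩ | ⟨heq, _⟩
          · rw [← mul_assoc, ← mul_assoc]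
            exact iff_of_true (mul_mem h1 hqT) (mul_mem h2 hqT)
          · rw [← mul_assoc, ← mul_assoc, heq]
      · -- p ∈ T
        have hpT : p ∈ T := mem_of_not_compl T hp
        by_cases hq : q ∈ (T : Set S)ᶜ
        · rcases right q hq with ⟨h1, h2⟩ | ⟨heq, _⟩
          · exact iff_of_true (mul_mem hpT h1) (mul_mem hpT h2)
          · rw [heq]
        · have hqT : q ∈ T := mem_of_not_compl T hq
          exact iff_of_true (mul_mem hpT (mul_mem hsT hqT))
            (mul_mem hpT (mul_mem hs'T hqT))

end Stmt12Aux

/-- If `T` is a finitely generated semigroup and `S` is a proper small extension of `T`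
(`T ⊊ S` with `S − T` finite), then for any endomorphism `φ` of `S`, the image `φ(T)`
is not all of `S`. -/
theorem stmt12 {S : Type*} [Semigroup S] (T : Subsemigroup S)
    (hfin : ((T : Set S)ᶜ).Finite) (hne : T ≠ ⊤)
    (hfg : ∃ X : Set S, X.Finite ∧ Subsemigroup.closure X = T)
    (φ : S →ₙ* S) :
    φ '' (T : Set S) ≠ Set.univ := by
  intro huniv
  obtain ⟨X, hX, hXT⟩ := hfg
  -- iterates of φ are multiplicative
  have iter_mul : ∀ (k : ℕ) (a b : S), (⇑φ)^[k] (a * b) = (⇑φ)^[k] a * (⇑φ)^[k] b := by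
    intro k
    induction k with
    | zero => intro a b; simp
    | succ k ih =>
      intro a b
      rw [Function.iterate_succ_apply, Function.iterate_succ_apply,
        Function.iterate_succ_apply, map_mul, ih]
  -- surjectivity of iterates onto S from T
  have sur1 : ∀ y : S, ∃ t, t ∈ (T : Set S) ∧ φ t = y := by
    intro y
    have : y ∈ φ '' (T : Set S) := huniv ▸ Set.mem_univ y
    obtain ⟨t, ht, hty⟩ := this
    exact ⟨t, ht, hty⟩
  have surk : ∀ (k : ℕ) (y : S), ∃ t, t ∈ (T : Set S) ∧ (⇑φ)^[k + 1] t = y := by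
    intro k
    induction k with
    | zero =>
      intro y
      obtain ⟨t, ht, hty⟩ := sur1 y
      exact ⟨t, ht, by simpa using hty⟩
    | succ k ih =>
      intro y
      obtain ⟨t₁, ht₁, e₁⟩ := ih y
      obtain ⟨t₂, ht₂, e₂⟩ := sur1 t₁
      refine ⟨t₂, ht₂, ?_⟩
      rw [Function.iterate_succ_apply, e₂, e₁]
  have surk' : ∀ (k : ℕ) (y : S), y ∈ (T : Set S) → ∃ t, t ∈ (T : Set S) ∧ (⇑φ)^[k] t = y := by
    intro k
    cases k with
    | zero => intro y hy; exact ⟨y, hy, rfl⟩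
    | succ k => intro y _; exact surk k y
  -- the generating set A = X ∪ Tᶜ; it generates all of S
  set A : Set S := X ∪ (T : Set S)ᶜ with hA
  have hAfin : A.Finite := hX.union hfin
  have hAgen : ∀ s : S, s ∈ Subsemigroup.closure A := by
    intro s
    by_cases hs : s ∈ T
    · have : s ∈ Subsemigroup.closure X := by rw [hXT]; exact hs
      exact Subsemigroup.closure_mono Set.subset_union_left this
    · exact Subsemigroup.subset_closure (Or.inr (by simpa using hs))
  -- pigeonhole on the invariants of iterates of generators
  haveI : Finite ↥((T : Set S)ᶜ) := hfin.to_subtype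
  haveI : Finite ↥A := hAfin.to_subtype
  have main : ∀ n m : ℕ, n < m →
      (∀ a : ↥A, Stmt12Aux.invr T ((⇑φ)^[n] (a : S)) = Stmt12Aux.invr T ((⇑φ)^[m] (a : S)))
      → False := by
    intro n m hnm hg
    -- syntactic equivalence of φ^[n] s and φ^[m] s for every s
    have key : ∀ s : S, Stmt12Aux.Sig T ((⇑φ)^[n] s) ((⇑φ)^[m] s) := by
      intro s
      refine Subsemigroup.closure_induction
        (p := fun x _ => Stmt12Aux.Sig T ((⇑φ)^[n] x) ((⇑φ)^[m] x)) ?_ ?_ (hAgen s)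
      · intro x hx
        exact Stmt12Aux.invr_eq_sig T (hg ⟨x, hx⟩)
      · intro x y _ _ hx hy
        have := Stmt12Aux.sig_mul T hx hy
        rwa [← iter_mul, ← iter_mul] at this
    -- pick f ∉ T
    have hf : ∃ f : S, f ∉ T := by
      by_contra h
      push_neg at h
      exact hne ((Subsemigroup.eq_top_iff' T).mpr h)
    obtain ⟨f, hf⟩ := hf
    -- pull f back along φ^[m-n] into T, then pull back further along φ^[n]
    obtain ⟨k, hk⟩ : ∃ k, m - n = k + 1 := ⟨m - n - 1, by omega⟩
    obtain ⟨t, htT, htf⟩ := surk k f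
    obtain ⟨t', ht'T, ht't⟩ := surk' n t htT
    have hmt' : (⇑φ)^[m] t' = f := by
      have hmn : (m - n) + n = m := by omega
      calc (⇑φ)^[m] t' = (⇑φ)^[(m - n) + n] t' := by rw [hmn]
        _ = (⇑φ)^[m - n] ((⇑φ)^[n] t') := Function.iterate_add_apply ..
        _ = (⇑φ)^[m - n] t := by rw [ht't]
        _ = f := by rw [hk]; exact htf
    have hsig := key t'
    rw [ht't, hmt'] at hsig
    exact hf (hsig.1.mp htT)
  obtain ⟨n, m, hnm, hg⟩ :=
    Finite.exists_ne_map_eq_of_infinite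
      (fun k : ℕ => fun a : ↥A => Stmt12Aux.invr T ((⇑φ)^[k] (a : S)))
  rcases hnm.lt_or_gt with h | h
  · exact main n m h (fun a => congrFun hg a)
  · exact main m n h (fun a => congrFun hg.symm a)
end

section
/- Within the class of finitely generated semigroups, co-hopficity is inherited by small extensions: if T is a finitely generated co-hopfian semigroup and S ⊇ T with S−T finite, then S is co-hopfian. Key lemma: for any injective endomorphism φ of S there exists n ∈ ℕ such that φⁿ(T) ⊆ T. -/
/-- Within the class of finitely generated semigroups, co-hopficity is inherited by
small extensions: if `T` is a finitely generated co-hopfian semigroup and `S ⊇ T`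
with `S − T` finite, then `S` is co-hopfian. Moreover (key lemma), for any injective
endomorphism `φ` of `S` there exists `n` such that `φⁿ(T) ⊆ T`. -/
theorem stmt13 {S : Type*} [Semigroup S] (T : Subsemigroup S)
    (hfin : ((T : Set S)ᶜ).Finite)
    (hfg : ∃ X : Set S, X.Finite ∧ Subsemigroup.closure X = T)
    (hco : ∀ ψ : T →ₙ* T, Function.Injective ψ → Function.Bijective ψ) :
    (∀ φ : S →ₙ* S, Function.Injective φ →
      ∃ n : ℕ, (⇑φ)^[n] '' (T : Set S) ⊆ (T : Set S)) ∧
    (∀ φ : S →ₙ* S, Function.Injective φ → Function.Bijective φ) := by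
  obtain ⟨X, hXfin, hXcl⟩ := hfg
  have hXT : X ⊆ (T : Set S) := hXcl ▸ Subsemigroup.subset_closure
  -- iterates of a mul hom are multiplicative
  have hiter_mul : ∀ (φ : S →ₙ* S) (n : ℕ) (a b : S),
      (⇑φ)^[n] (a * b) = (⇑φ)^[n] a * (⇑φ)^[n] b := by
    intro φ n
    induction n with
    | zero => intro a b; simp
    | succ k ih =>
      intro a b
      simp only [Function.iterate_succ_apply', ih, map_mul]
  -- KEY LEMMA (with positivity of n)
  have key : ∀ φ : S →ₙ* S, Function.Injective ⇑φ →
      ∃ n : ℕ, 0 < n ∧ ∀ s ∈ (T : Set S), (⇑φ)^[n] s ∈ (T : Set S) := by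
    intro φ hφ
    have hperx : ∀ x ∈ X, ∃ p N : ℕ, 0 < p ∧
        ∀ n, N ≤ n → p ∣ n → (⇑φ)^[n] x ∈ (T : Set S) := by
      intro x hx
      by_cases hper : ∃ q, 0 < q ∧ (⇑φ)^[q] x = x
      · obtain ⟨q, hq, hqx⟩ := hper
        refine ⟨q, 0, hq, ?_⟩
        intro n _ hdvd
        obtain ⟨k, rfl⟩ := hdvd
        have hk : ∀ k, (⇑φ)^[q * k] x = x := by
          intro k
          induction k with
          | zero => simp
          | succ m ih =>
            rw [Nat.mul_succ, Function.iterate_add_apply, hqx, ih]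
        rw [hk k]; exact hXT hx
      · push_neg at hper
        have hstep : ∀ i j : ℕ, i < j → (⇑φ)^[i] x = (⇑φ)^[j] x → False := by
          intro i j hij h
          have h2 : (⇑φ)^[i] ((⇑φ)^[j - i] x) = (⇑φ)^[i] x := by
            rw [← Function.iterate_add_apply]
            rw [Nat.add_sub_cancel' hij.le]
            exact h.symm
          have h3 := (hφ.iterate i) h2
          exact hper (j - i) (by omega) h3
        have hinj : Function.Injective (fun n => (⇑φ)^[n] x) := by
          intro i j h
          rcases lt_trichotomy i j with hlt | he | hlt
          · exact absurd (hstep i j hlt h) (fun h => h)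
          · exact he
          · exact absurd (hstep j i hlt h.symm) (fun h => h)
        have hB : {n : ℕ | (⇑φ)^[n] x ∈ ((T : Set S))ᶜ}.Finite := by
          have := Set.Finite.preimage hinj.injOn hfin
          exact this
        obtain ⟨N, hN⟩ := hB.bddAbove
        refine ⟨1, N + 1, Nat.one_pos, ?_⟩
        intro n hn _
        by_contra hc
        have : n ∈ {n : ℕ | (⇑φ)^[n] x ∈ ((T : Set S))ᶜ} := hc
        have := hN this
        omega
    choose! p N hp hP using hperx
    set F := hXfin.toFinset with hF
    have hPpos : 0 < ∏ x ∈ F, p x := by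
      apply Finset.prod_pos
      intro x hxF
      exact hp x (hXfin.mem_toFinset.mp hxF)
    set Pn := ∏ x ∈ F, p x with hPn
    set M := (F.sup N) + 1 with hM
    refine ⟨Pn * M, Nat.mul_pos hPpos (Nat.succ_pos _), ?_⟩
    intro s hs
    have hs' : s ∈ Subsemigroup.closure X := hXcl ▸ hs
    clear hs
    induction hs' using Subsemigroup.closure_induction with
    | mem x hx =>
      apply hP x hx
      · have h1 : N x ≤ F.sup N := Finset.le_sup (hXfin.mem_toFinset.mpr hx)
        have h2 : M ≤ Pn * M := Nat.le_mul_of_pos_left _ hPpos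
        omega
      · exact Dvd.dvd.mul_right (Finset.dvd_prod_of_mem p (hXfin.mem_toFinset.mpr hx)) M
    | mul a b ha hb iha ihb =>
      rw [hiter_mul]
      exact T.mul_mem iha ihb
  constructor
  · intro φ hφ
    obtain ⟨n, _, h⟩ := key φ hφ
    exact ⟨n, by rintro _ ⟨s, hs, rfl⟩; exact h s hs⟩
  · intro φ hφ
    refine ⟨hφ, ?_⟩
    obtain ⟨n, hn, hT⟩ := key φ hφ
    -- restriction of φ^[n] to T
    set ψ : T →ₙ* T :=
      { toFun := fun t => ⟨(⇑φ)^[n] (t : S), hT _ t.2⟩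
        map_mul' := by
          intro a b
          ext
          exact hiter_mul φ n a b } with hψ
    have hψinj : Function.Injective ψ := by
      intro a b h
      apply Subtype.ext
      exact (hφ.iterate n) (congrArg Subtype.val h)
    obtain ⟨-, hψsurj⟩ := hco ψ hψinj
    -- T ⊆ range φ^[k*n]
    have hrange : ∀ k : ℕ, (T : Set S) ⊆ Set.range ((⇑φ)^[k * n]) := by
      intro k
      induction k with
      | zero => intro t ht; exact ⟨t, by simp⟩
      | succ m ih =>
        intro t ht
        obtain ⟨t', ht'⟩ := hψsurj ⟨t, ht⟩
        have ht'T : (t' : S) ∈ (T : Set S) := t'.2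
        obtain ⟨s, hs⟩ := ih ht'T
        refine ⟨s, ?_⟩
        have hval : (⇑φ)^[n] (t' : S) = t := congrArg Subtype.val ht'
        have e : (m + 1) * n = n + m * n := by ring
        rw [e, Function.iterate_add_apply, hs, hval]
    -- complements stabilize
    set E : ℕ → Set S := fun k => (Set.range ((⇑φ)^[k * n]))ᶜ with hE
    have hEsub : ∀ k, E k ⊆ ((T : Set S))ᶜ := fun k =>
      Set.compl_subset_compl.mpr (hrange k)
    have hEfin : ∀ k, (E k).Finite := fun k => hfin.subset (hEsub k)
    have hEmono : ∀ k, E k ⊆ E (k + 1) := by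
      intro k
      apply Set.compl_subset_compl.mpr
      rintro _ ⟨s, rfl⟩
      exact ⟨(⇑φ)^[n] s, by rw [Nat.succ_mul, Function.iterate_add_apply]⟩
    have hstab : ∃ k, E k = E (k + 1) := by
      by_contra hc
      push_neg at hc
      have hgrow : ∀ k, k ≤ (E k).ncard := by
        intro k
        induction k with
        | zero => exact Nat.zero_le _
        | succ m ih =>
          have hss : E m ⊂ E (m + 1) := (hEmono m).ssubset_of_ne (hc m)
          have := Set.ncard_lt_ncard hss (hEfin (m + 1))
          omega
      have h1 := hgrow (((T : Set S))ᶜ.ncard + 1)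
      have h2 := Set.ncard_le_ncard (hEsub (((T : Set S))ᶜ.ncard + 1)) hfin
      omega
    obtain ⟨k, hk⟩ := hstab
    have hreq : Set.range ((⇑φ)^[k * n]) = Set.range ((⇑φ)^[(k + 1) * n]) := by
      have := congrArg compl hk
      simpa [hE] using this
    -- deduce φ^[n] surjective
    have hsurjn : Function.Surjective ((⇑φ)^[n]) := by
      intro y
      have hy : (⇑φ)^[k * n] y ∈ Set.range ((⇑φ)^[(k + 1) * n]) := hreq ▸ ⟨y, rfl⟩
      obtain ⟨s, hs⟩ := hy
      have e : (k + 1) * n = k * n + n := by ring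
      rw [e, Function.iterate_add_apply] at hs
      exact ⟨s, (hφ.iterate (k * n)) hs⟩
    -- φ surjective
    intro y
    obtain ⟨s, hs⟩ := hsurjn y
    obtain ⟨m, rfl⟩ : ∃ m, n = m + 1 := ⟨n - 1, by omega⟩
    rw [Function.iterate_succ_apply'] at hs
    exact ⟨(⇑φ)^[m] s, hs⟩
end

section
/- Let T be a residually finite semigroup and S a semigroup containing T with S−T finite. Then S is residually finite. -/
namespace Stmt14Aux

variable {S : Type*} [Semigroup S]

/-- The equivalence relation on `S`: `c` on `T`, diagonal elsewhere. -/
def rhoRel (T : Subsemigroup S) (c : Con T) (x y : S) : Prop :=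
  x = y ∨ ∃ (hx : x ∈ T) (hy : y ∈ T), c ⟨x, hx⟩ ⟨y, hy⟩

theorem rho_refl (T : Subsemigroup S) (c : Con T) (x : S) : rhoRel T c x x := Or.inl rfl

theorem rho_symm {T : Subsemigroup S} {c : Con T} {x y : S} (h : rhoRel T c x y) :
    rhoRel T c y x := by
  rcases h with rfl | ⟨hx, hy, h⟩
  · exact Or.inl rfl
  · exact Or.inr ⟨hy, hx, c.symm h⟩

theorem rho_trans {T : Subsemigroup S} {c : Con T} {x y z : S}
    (h : rhoRel T c x y) (h' : rhoRel T c y z) : rhoRel T c x z := by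
  rcases h with rfl | ⟨hx, hy, h⟩
  · exact h'
  · rcases h' with rfl | ⟨hy', hz, h'⟩
    · exact Or.inr ⟨hx, hy, h⟩
    · exact Or.inr ⟨hx, hz, c.trans h h'⟩

theorem rho_mulT_left {T : Subsemigroup S} {c : Con T} {x y : S}
    (hx : x ∈ T) (hy : y ∈ T) (h : c ⟨x, hx⟩ ⟨y, hy⟩) {s : S} (hs : s ∈ T) :
    rhoRel T c (s * x) (s * y) :=
  Or.inr ⟨mul_mem hs hx, mul_mem hs hy, c.mul (c.refl ⟨s, hs⟩) h⟩

theorem rho_mulT_right {T : Subsemigroup S} {c : Con T} {x y : S}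
    (hx : x ∈ T) (hy : y ∈ T) (h : c ⟨x, hx⟩ ⟨y, hy⟩) {t : S} (ht : t ∈ T) :
    rhoRel T c (x * t) (y * t) :=
  Or.inr ⟨mul_mem hx ht, mul_mem hy ht, c.mul h (c.refl ⟨t, ht⟩)⟩

/-- The syntactic congruence of `rhoRel`. -/
def sigmaCon (T : Subsemigroup S) (c : Con T) : Con S where
  r x y := rhoRel T c x y ∧ (∀ s, rhoRel T c (s * x) (s * y)) ∧
    (∀ t, rhoRel T c (x * t) (y * t)) ∧ ∀ s t, rhoRel T c (s * x * t) (s * y * t)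
  iseqv := by
    refine ⟨fun x => ⟨rho_refl _ _ _, fun s => rho_refl _ _ _, fun t => rho_refl _ _ _,
      fun s t => rho_refl _ _ _⟩, fun h => ⟨rho_symm h.1, fun s => rho_symm (h.2.1 s),
      fun t => rho_symm (h.2.2.1 t), fun s t => rho_symm (h.2.2.2 s t)⟩, fun h h' => ?_⟩
    exact ⟨rho_trans h.1 h'.1, fun s => rho_trans (h.2.1 s) (h'.2.1 s),
      fun t => rho_trans (h.2.2.1 t) (h'.2.2.1 t),
      fun s t => rho_trans (h.2.2.2 s t) (h'.2.2.2 s t)⟩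
  mul' := by
    rintro a b x y ⟨ha1, ha2, ha3, ha4⟩ ⟨hx1, hx2, hx3, hx4⟩
    refine ⟨rho_trans (ha3 x) (hx2 b), fun s => ?_, fun t => ?_, fun s t => ?_⟩
    · have h1 := ha4 s x
      have h2 := hx2 (s * b)
      have := rho_trans h1 (by simpa [mul_assoc] using h2)
      simpa [mul_assoc] using this
    · have h1 := ha3 (x * t)
      have h2 := hx4 b t
      have := rho_trans (by simpa [mul_assoc] using h1) (by simpa [mul_assoc] using h2)
      simpa [mul_assoc] using this
    · have h1 := ha4 s (x * t)
      have h2 := hx4 (s * b) t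
      have := rho_trans (by simpa [mul_assoc] using h1) (by simpa [mul_assoc] using h2)
      simpa [mul_assoc] using this

theorem sigma_of {T : Subsemigroup S} {c : Con T} {x y : S}
    (h0 : rhoRel T c x y)
    (h1 : ∀ s : ((T : Set S)ᶜ : Set S), rhoRel T c (↑s * x) (↑s * y))
    (h2 : ∀ t : ((T : Set S)ᶜ : Set S), rhoRel T c (x * ↑t) (y * ↑t))
    (h3 : ∀ s t : ((T : Set S)ᶜ : Set S), rhoRel T c (↑s * x * ↑t) (↑s * y * ↑t)) :
    sigmaCon T c x y := by
  rcases h0 with rfl | ⟨hx, hy, hc⟩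
  · exact (sigmaCon T c).refl x
  have L1 : ∀ s : S, rhoRel T c (s * x) (s * y) := fun s => by
    by_cases hs : s ∈ T
    · exact rho_mulT_left hx hy hc hs
    · exact h1 ⟨s, hs⟩
  have L2 : ∀ t : S, rhoRel T c (x * t) (y * t) := fun t => by
    by_cases ht : t ∈ T
    · exact rho_mulT_right hx hy hc ht
    · exact h2 ⟨t, ht⟩
  refine ⟨Or.inr ⟨hx, hy, hc⟩, L1, L2, fun s t => ?_⟩
  by_cases hs : s ∈ T
  · rcases L2 t with heq | ⟨hxt, hyt, hc'⟩
    · rw [mul_assoc, mul_assoc, heq]; exact rho_refl _ _ _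
    · have := rho_mulT_left hxt hyt hc' hs
      simpa [mul_assoc] using this
  · by_cases ht : t ∈ T
    · rcases h1 ⟨s, hs⟩ with heq | ⟨hsx, hsy, hc'⟩
      · rw [heq]; exact rho_refl _ _ _
      · exact rho_mulT_right hsx hsy hc' ht
    · exact h3 ⟨s, hs⟩ ⟨t, ht⟩


def rhoSetoid (T : Subsemigroup S) (c : Con T) : Setoid S :=
  ⟨rhoRel T c, rho_refl T c, fun h => rho_symm h, fun h h' => rho_trans h h'⟩

theorem finite_rhoQuot (T : Subsemigroup S) (c : Con T) (hfin : ((T : Set S)ᶜ).Finite)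
    (hc : Finite c.Quotient) : Finite (Quotient (rhoSetoid T c)) := by
  classical
  have := hfin.to_subtype
  refine Finite.of_injective
    (Quotient.lift (fun x : S => if hx : x ∈ T then (Sum.inl ((⟨x, hx⟩ : T) : c.Quotient) :
        c.Quotient ⊕ ((T : Set S)ᶜ : Set S)) else Sum.inr ⟨x, hx⟩) ?_) ?_
  · rintro x y (rfl | ⟨hx, hy, h⟩)
    · rfl
    · simp only [dif_pos hx, dif_pos hy]
      exact congrArg Sum.inl (c.eq.mpr h)
  · rintro ⟨x⟩ ⟨y⟩ h
    refine Quotient.sound ?_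
    have h' : (if hx : x ∈ T then (Sum.inl ((⟨x, hx⟩ : T) : c.Quotient) :
          c.Quotient ⊕ ((T : Set S)ᶜ : Set S)) else Sum.inr ⟨x, hx⟩) =
        (if hy : y ∈ T then (Sum.inl ((⟨y, hy⟩ : T) : c.Quotient) :
          c.Quotient ⊕ ((T : Set S)ᶜ : Set S)) else Sum.inr ⟨y, hy⟩) := h
    by_cases hx : x ∈ T <;> by_cases hy : y ∈ T
    · rw [dif_pos hx, dif_pos hy] at h'
      exact Or.inr ⟨hx, hy, c.eq.mp (Sum.inl.inj h')⟩
    · rw [dif_pos hx, dif_neg hy] at h'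
      exact absurd h' (by simp)
    · rw [dif_neg hx, dif_pos hy] at h'
      exact absurd h' (by simp)
    · rw [dif_neg hx, dif_neg hy] at h'
      exact Or.inl (congrArg Subtype.val (Sum.inr.inj h'))

theorem finite_sigmaQuot (T : Subsemigroup S) (c : Con T) (hfin : ((T : Set S)ᶜ).Finite)
    (hc : Finite c.Quotient) : Finite (sigmaCon T c).Quotient := by
  classical
  have hQ : Finite (Quotient (rhoSetoid T c)) := finite_rhoQuot T c hfin hc
  have := hfin.to_subtype
  set Ψ : S → Quotient (rhoSetoid T c) ×
      (((T : Set S)ᶜ : Set S) → Quotient (rhoSetoid T c)) ×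
      (((T : Set S)ᶜ : Set S) → Quotient (rhoSetoid T c)) ×
      (((T : Set S)ᶜ : Set S) × ((T : Set S)ᶜ : Set S) → Quotient (rhoSetoid T c)) :=
    fun x => (Quotient.mk _ x, fun s => Quotient.mk _ (↑s * x),
      fun t => Quotient.mk _ (x * ↑t), fun p => Quotient.mk _ (↑p.1 * x * ↑p.2)) with hΨ
  have key : ∀ x y : S, sigmaCon T c x y → Ψ x = Ψ y := by
    rintro x y ⟨h0, h1, h2, h3⟩
    exact Prod.ext (Quotient.sound h0) (Prod.ext (funext fun s => Quotient.sound (h1 s))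
      (Prod.ext (funext fun t => Quotient.sound (h2 t))
        (funext fun p => Quotient.sound (h3 p.1 p.2))))
  refine Finite.of_injective (Quotient.lift Ψ key) ?_
  rintro ⟨x⟩ ⟨y⟩ h
  refine Quotient.sound ?_
  replace h : Ψ x = Ψ y := h
  exact sigma_of (Quotient.exact (congrArg Prod.fst h))
    (fun s => Quotient.exact (congrFun (congrArg (fun z => z.2.1) h) s))
    (fun t => Quotient.exact (congrFun (congrArg (fun z => z.2.2.1) h) t))
    (fun s t => Quotient.exact (congrFun (congrArg (fun z => z.2.2.2) h) (s, t)))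

end Stmt14Aux

open Stmt14Aux in
/-- If `T` is a residually finite semigroup and `S` contains `T` as a subsemigroup
with finite complement, then `S` is residually finite (distinct elements are
separated by a congruence with finitely many classes). -/
theorem stmt14 {S : Type*} [Semigroup S] (T : Subsemigroup S)
    (hfin : ((T : Set S)ᶜ).Finite)
    (hrf : ∀ u v : T, u ≠ v → ∃ c : Con T, Finite c.Quotient ∧ ¬ c u v) :
    ∀ u v : S, u ≠ v → ∃ c : Con S, Finite c.Quotient ∧ ¬ c u v := by
  intro u v huv
  obtain ⟨c, hcfin, hcsep⟩ : ∃ c : Con T, Finite c.Quotient ∧ ¬ rhoRel T c u v := by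
    by_cases hu : u ∈ T
    · by_cases hv : v ∈ T
      · obtain ⟨c, hfinc, hne⟩ := hrf ⟨u, hu⟩ ⟨v, hv⟩ (by simpa [Subtype.ext_iff] using huv)
        refine ⟨c, hfinc, ?_⟩
        rintro (rfl | ⟨hx, hy, h⟩)
        · exact huv rfl
        · exact hne h
      · refine ⟨⊤, ?_, ?_⟩
        · have : Subsingleton ((⊤ : Con T).Quotient) :=
            ⟨fun a b => Quotient.inductionOn₂ a b fun x y => Quotient.sound trivial⟩
          exact Finite.of_subsingleton
        · rintro (rfl | ⟨hx, hy, h⟩)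
          · exact huv rfl
          · exact hv hy
    · refine ⟨⊤, ?_, ?_⟩
      · have : Subsingleton ((⊤ : Con T).Quotient) :=
          ⟨fun a b => Quotient.inductionOn₂ a b fun x y => Quotient.sound trivial⟩
        exact Finite.of_subsingleton
      · rintro (rfl | ⟨hx, hy, h⟩)
        · exact huv rfl
        · exact hu hx
  exact ⟨sigmaCon T c, finite_sigmaQuot T c hfin hcfin, fun h => hcsep h.1⟩
end

section
/- If a semigroup T admits a Markov language (a regular language of unique normal forms over a finite alphabet, closed under nonempty prefixes) and S ⊇ T with S−T finite, then L ∪ C is a Markov language for S, where C is a set of fresh letters in bijection with S−T; hence S is Markov. -/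
/-- Evaluation of a nonempty word in a semigroup, given values of the letters. -/
def evalW {A : Type*} {S : Type*} [Mul S] (σ : A → S) : List A → Option S
  | [] => none
  | a :: l => some (l.foldl (fun s b => s * σ b) (σ a))

/-- A set of words is regular if it is accepted by a DFA with finitely many states. -/
def IsRegLang {A : Type*} (L : Set (List A)) : Prop :=
  ∃ (Q : Type) (_ : Fintype Q) (M : DFA A Q), ∀ w, w ∈ M.accepts ↔ w ∈ L

/-- `L` (with letter values `σ`) is a Markov language for the semigroup `S`:
a regular language of nonempty words giving unique normal forms for all elements
of `S`, closed under taking nonempty prefixes. -/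
def MarkovLang {S : Type*} [Mul S] {A : Type*} (L : Set (List A)) (σ : A → S) : Prop :=
  IsRegLang L ∧ (∀ w ∈ L, w ≠ []) ∧
    (∀ s : S, ∃! w, w ∈ L ∧ evalW σ w = some s) ∧
    (∀ w ∈ L, ∀ u : List A, u ≠ [] → u <+: w → u ∈ L)

section ext
variable {A C Q : Type*} (M : DFA A Q)

/-- The DFA for the enlarged alphabet: it accepts the images under `Sum.inl` of
words accepted by `M`, together with all one-letter words `[Sum.inr c]`. -/
def extDFA : DFA (A ⊕ C) (Option (Option Q ⊕ Unit)) where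
  step s x := match s, x with
    | some (Sum.inl none), Sum.inl a => some (Sum.inl (some (M.step M.start a)))
    | some (Sum.inl none), Sum.inr _ => some (Sum.inr ())
    | some (Sum.inl (some q)), Sum.inl a => some (Sum.inl (some (M.step q a)))
    | _, _ => none
  start := some (Sum.inl none)
  accept := {s | match s with
    | some (Sum.inl (some q)) => q ∈ M.accept
    | some (Sum.inr _) => True
    | _ => False}

lemma extDFA_dead (w : List (A ⊕ C)) :
    (extDFA (C := C) M).evalFrom none w = none := by
  induction w with
  | nil => rfl
  | cons x l ih => cases x <;> simpa [DFA.evalFrom, extDFA] using ih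

lemma extDFA_run_accept (w : List (A ⊕ C)) (q : Q) :
    (extDFA (C := C) M).evalFrom (some (Sum.inl (some q))) w ∈ (extDFA (C := C) M).accept
      ↔ ∃ u : List A, w = u.map Sum.inl ∧ M.evalFrom q u ∈ M.accept := by
  induction w generalizing q with
  | nil =>
    constructor
    · intro hq; exact ⟨[], rfl, hq⟩
    · rintro ⟨u, hu, hacc⟩
      cases u with
      | nil => exact hacc
      | cons a l => simp at hu
  | cons x l ih =>
    cases x with
    | inl a =>
      rw [show (extDFA (C := C) M).evalFrom (some (Sum.inl (some q))) (Sum.inl a :: l)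
        = (extDFA (C := C) M).evalFrom (some (Sum.inl (some (M.step q a)))) l from rfl, ih]
      constructor
      · rintro ⟨u, rfl, hacc⟩
        exact ⟨a :: u, rfl, hacc⟩
      · rintro ⟨u, hu, hacc⟩
        cases u with
        | nil => simp at hu
        | cons b u' =>
          simp only [List.map_cons, List.cons.injEq, Sum.inl.injEq] at hu
          obtain ⟨rfl, rfl⟩ := hu
          exact ⟨u', rfl, hacc⟩
    | inr c =>
      rw [show (extDFA (C := C) M).evalFrom (some (Sum.inl (some q))) (Sum.inr c :: l)
        = (extDFA (C := C) M).evalFrom none l from rfl, extDFA_dead]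
      constructor
      · intro hx; exact absurd hx (by simp [extDFA])
      · rintro ⟨u, hu, -⟩; cases u <;> simp at hu

lemma extDFA_accepts (L : Set (List A)) (hL : ∀ w, w ∈ M.accepts ↔ w ∈ L)
    (hne : ∀ w ∈ L, w ≠ []) (w : List (A ⊕ C)) :
    w ∈ (extDFA (C := C) M).accepts ↔
      (∃ v ∈ L, w = v.map Sum.inl) ∨ (∃ c : C, w = [Sum.inr c]) := by
  rw [DFA.mem_accepts]
  cases w with
  | nil =>
    constructor
    · intro hx; exact absurd hx (by simp [extDFA])
    · rintro (⟨v, hv, hveq⟩ | ⟨c, hc⟩)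
      · exact absurd (by cases v with
          | nil => rfl
          | cons a l => simp at hveq) (hne v hv)
      · simp at hc
  | cons x l =>
    cases x with
    | inl a =>
      rw [show (extDFA (C := C) M).eval (Sum.inl a :: l)
        = (extDFA (C := C) M).evalFrom (some (Sum.inl (some (M.step M.start a)))) l from rfl,
        extDFA_run_accept]
      constructor
      · rintro ⟨u, rfl, hacc⟩
        exact Or.inl ⟨a :: u, (hL (a :: u)).mp hacc, rfl⟩
      · rintro (⟨v, hv, hveq⟩ | ⟨c, hc⟩)
        · cases v with
          | nil => simp at hveq
          | cons b u =>
            simp only [List.map_cons, List.cons.injEq, Sum.inl.injEq] at hveq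
            obtain ⟨rfl, rfl⟩ := hveq
            exact ⟨u, rfl, (hL _).mpr hv⟩
        · simp at hc
    | inr c =>
      rw [show (extDFA (C := C) M).eval (Sum.inr c :: l)
        = (extDFA (C := C) M).evalFrom (some (Sum.inr ())) l from rfl]
      cases l with
      | nil =>
        simp only [DFA.evalFrom, List.foldl_nil]
        constructor
        · intro _; exact Or.inr ⟨c, rfl⟩
        · intro _; trivial
      | cons y l' =>
        rw [show (extDFA (C := C) M).evalFrom (some (Sum.inr ())) (y :: l')
          = (extDFA (C := C) M).evalFrom none l' from (by cases y <;> rfl), extDFA_dead]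
        constructor
        · intro hx; exact absurd hx (by simp [extDFA])
        · rintro (⟨v, hv, hveq⟩ | ⟨c', hc⟩)
          · cases v <;> simp at hveq
          · simp at hc
end ext

section evalW
variable {S : Type*} [Semigroup S] {T : Subsemigroup S} {A C : Type*}

lemma foldl_coe (σ : A → T) (g : C → S) (l : List A) (t : T) :
    (l.map Sum.inl).foldl (fun s b => s * Sum.elim (fun a => ((σ a : S))) g b) (t : S)
      = ((l.foldl (fun s b => s * σ b) t : T) : S) := by
  induction l generalizing t with
  | nil => rfl
  | cons a l ih =>
    simp only [List.map_cons, List.foldl_cons, Sum.elim_inl, ← MulMemClass.coe_mul]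
    exact ih (t * σ a)

lemma evalW_map_inl (σ : A → T) (g : C → S) (v : List A) :
    evalW (Sum.elim (fun a => ((σ a : S))) g) (v.map Sum.inl) = (evalW σ v).map (↑) := by
  cases v with
  | nil => rfl
  | cons a l =>
    simp only [evalW, List.map_cons, Option.map_some, Sum.elim_inl]
    exact congrArg some (foldl_coe σ g l (σ a))
end evalW

/-- If a semigroup `T` admits a Markov language `L` over a finite alphabet `A`, and
`S ⊇ T` with `S − T` finite, then `L ∪ C` is a Markov language for `S`, where `C` is a
set of fresh letters in bijection with `S − T`; hence `S` is Markov. -/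
theorem stmt15 {S : Type*} [Semigroup S] (T : Subsemigroup S)
    (hfin : ((T : Set S)ᶜ).Finite)
    {A : Type*} [Fintype A] (L : Set (List A)) (σ : A → T)
    (h : MarkovLang L σ) :
    MarkovLang
      ({ w : List (A ⊕ ↥hfin.toFinset) |
          (∃ v ∈ L, w = v.map Sum.inl) ∨ (∃ c : ↥hfin.toFinset, w = [Sum.inr c]) })
      (Sum.elim (fun a => (σ a : S)) (fun c => (c.1 : S))) := by
  obtain ⟨⟨Q, hQ, M, hM⟩, hne, huni, hpre⟩ := h
  refine ⟨⟨Option (Option Q ⊕ Unit), inferInstance, extDFA M,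
      fun w => extDFA_accepts M L hM hne w⟩, ?_, ?_, ?_⟩
  · rintro w (⟨v, hv, rfl⟩ | ⟨c, rfl⟩)
    · simpa using hne v hv
    · simp
  · intro s
    by_cases hs : s ∈ T
    · obtain ⟨w, ⟨hwL, hwe⟩, huniq⟩ := huni ⟨s, hs⟩
      refine ⟨w.map Sum.inl, ⟨Or.inl ⟨w, hwL, rfl⟩, by rw [evalW_map_inl, hwe]; rfl⟩, ?_⟩
      rintro w' ⟨(⟨v, hv, rfl⟩ | ⟨c, rfl⟩), he⟩
      · rw [evalW_map_inl] at he
        obtain ⟨t, ht, hts⟩ := Option.map_eq_some_iff.mp he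
        have : v = w := huniq v ⟨hv, by rw [ht]; exact congrArg some (Subtype.ext hts)⟩
        rw [this]
      · have he' : (c : S) = s := Option.some_injective _ he
        exact absurd hs (by rw [← he']; exact hfin.mem_toFinset.mp c.2)
    · refine ⟨[Sum.inr ⟨s, hfin.mem_toFinset.mpr hs⟩],
        ⟨Or.inr ⟨⟨s, hfin.mem_toFinset.mpr hs⟩, rfl⟩, rfl⟩, ?_⟩
      rintro w' ⟨(⟨v, hv, rfl⟩ | ⟨c, rfl⟩), he⟩
      · rw [evalW_map_inl] at he
        obtain ⟨t, ht, hts⟩ := Option.map_eq_some_iff.mp he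
        exact absurd (hts ▸ t.2) hs
      · have he' : (c : S) = s := Option.some_injective _ he
        simp [show c = ⟨s, hfin.mem_toFinset.mpr hs⟩ from Subtype.ext he']
  · rintro w (⟨v, hv, rfl⟩ | ⟨c, rfl⟩) u hu hpref
    · obtain ⟨t, ht⟩ := hpref
      have hu' : u = (v.take u.length).map Sum.inl := by
        have h1 : u = (v.map Sum.inl).take u.length := by
          rw [← ht, List.take_left]
        rw [List.map_take]
        exact h1
      refine Or.inl ⟨v.take u.length, hpre v hv _ ?_ (List.take_prefix _ _), hu'⟩
      intro hnil
      exact hu (by rw [hu', hnil]; rfl)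
    · obtain ⟨t, ht⟩ := hpref
      cases u with
      | nil => exact absurd rfl hu
      | cons y u' =>
        simp only [List.cons_append, List.cons.injEq] at ht
        obtain ⟨rfl, ht2⟩ := ht
        obtain ⟨rfl, -⟩ := List.append_eq_nil_iff.mp ht2
        exact Or.inr ⟨c, rfl⟩
end

section
/- Let S be a non-finitely-generated semigroup. Then the strong cofinality of S is uncountable if and only if every function Φ: S → ℕ satisfying Φ(st) ≤ Φ(s) + Φ(t) + k for all s,t ∈ S (for some constant k depending on Φ) is bounded above. -/
/-- For a non-finitely-generated semigroup `S`, the strong cofinality of `S` is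
uncountable (there is no countable chain of proper subsets `S₀ ⊆ S₁ ⊆ ⋯` with union
`S` and `SₙSₙ ⊆ S_{n+1}`) if and only if every function `Φ : S → ℕ` satisfying
`Φ(st) ≤ Φ(s) + Φ(t) + k` for all `s, t` (for some constant `k`) is bounded above. -/
theorem stmt16 {S : Type*} [Semigroup S]
    (hnfg : ¬∃ X : Set S, X.Finite ∧ Subsemigroup.closure X = ⊤) :
    (¬∃ C : ℕ → Set S, (∀ m, C m ⊆ C (m + 1)) ∧ (∀ m, C m ≠ Set.univ) ∧
        (⋃ m, C m) = Set.univ ∧ (∀ m, ∀ s ∈ C m, ∀ t ∈ C m, s * t ∈ C (m + 1)))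
      ↔ ∀ Φ : S → ℕ, (∃ k : ℕ, ∀ s t : S, Φ (s * t) ≤ Φ s + Φ t + k) →
          ∃ B : ℕ, ∀ s : S, Φ s ≤ B := by
  constructor
  · rintro hchain Φ ⟨k, hk⟩
    by_contra hb
    push_neg at hb
    set f : ℕ → ℕ := fun m => Nat.rec 0 (fun _ x => 2 * x + k + 1) m with hf
    have hfs : ∀ m, f (m + 1) = 2 * f m + k + 1 := fun m => rfl
    have hmono : ∀ m, m ≤ f m := by
      intro m
      induction m with
      | zero => simp
      | succ n ih => rw [hfs]; omega
    apply hchain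
    refine ⟨fun m => {s | Φ s ≤ f m}, ?_, ?_, ?_, ?_⟩
    · intro m s hs
      simp only [Set.mem_setOf_eq] at hs ⊢
      rw [hfs]; omega
    · intro m h
      obtain ⟨s, hs⟩ := hb (f m)
      have : Φ s ≤ f m := Set.eq_univ_iff_forall.mp h s
      omega
    · apply Set.eq_univ_of_forall
      intro s
      exact Set.mem_iUnion.mpr ⟨Φ s, hmono (Φ s)⟩
    · intro m s hs t ht
      simp only [Set.mem_setOf_eq] at hs ht ⊢
      have := hk s t
      rw [hfs]; omega
  · rintro hΦ ⟨C, hsub, hne, hun, hmul⟩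
    classical
    have hmono : ∀ a b, a ≤ b → C a ⊆ C b := by
      intro a b h
      induction b with
      | zero => interval_cases a; exact le_refl _
      | succ n ih =>
        rcases Nat.lt_succ_iff_lt_or_eq.mp (Nat.lt_succ_of_le h) with h' | h'
        · exact (ih (Nat.lt_succ_iff.mp h')).trans (hsub n)
        · exact h' ▸ le_refl _
    have hex : ∀ s : S, ∃ m, s ∈ C m := by
      intro s
      have : s ∈ ⋃ m, C m := hun ▸ Set.mem_univ s
      simpa using this
    set Φ : S → ℕ := fun s => Nat.find (hex s) with hΦdef
    have hmem : ∀ s, s ∈ C (Φ s) := fun s => Nat.find_spec (hex s)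
    have hkey : ∀ s t : S, Φ (s * t) ≤ Φ s + Φ t + 1 := by
      intro s t
      have hs' : s ∈ C (max (Φ s) (Φ t)) := hmono _ _ (le_max_left _ _) (hmem s)
      have ht' : t ∈ C (max (Φ s) (Φ t)) := hmono _ _ (le_max_right _ _) (hmem t)
      have hst : s * t ∈ C (max (Φ s) (Φ t) + 1) := hmul _ _ hs' _ ht'
      have h1 : Φ (s * t) ≤ max (Φ s) (Φ t) + 1 := Nat.find_le (p := fun n => s * t ∈ C n) hst
      have h2 : max (Φ s) (Φ t) ≤ Φ s + Φ t :=
        max_le (Nat.le_add_right _ _) (Nat.le_add_left _ _)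
      omega
    obtain ⟨B, hB⟩ := hΦ Φ ⟨1, hkey⟩
    apply hne B
    apply Set.eq_univ_of_forall
    intro s
    exact hmono _ _ (hB s) (hmem s)
end

section
/- Let S be a cancellative semigroup and T a subsemigroup with S−T finite. Then the largest ideal of S contained in T has finite complement in S (finite Rees index in S). -/
/-- If `S` is a cancellative semigroup and `T` a subsemigroup with finite complement,
then the largest (two-sided) ideal of `S` contained in `T` has finite complement
in `S`. -/
theorem stmt19 {S : Type*} [Semigroup S] [IsCancelMul S] (T : Subsemigroup S)
    (hfin : ((T : Set S)ᶜ).Finite) :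
    ((⋃₀ {J : Set S | J ⊆ (T : Set S) ∧
        ∀ s : S, ∀ j ∈ J, s * j ∈ J ∧ j * s ∈ J})ᶜ).Finite := by
  classical
  set I : Set S :=
    {x | x ∈ T ∧ (∀ u, u * x ∈ T) ∧ (∀ v, x * v ∈ T) ∧ (∀ u v, u * x * v ∈ T)} with hI
  have hImem : I ∈ {J : Set S | J ⊆ (T : Set S) ∧
      ∀ s : S, ∀ j ∈ J, s * j ∈ J ∧ j * s ∈ J} := by
    constructor
    · intro x hx; exact hx.1
    · rintro s j ⟨hj, hl, hr, hb⟩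
      refine ⟨⟨hl s, fun u => ?_, fun v => ?_, fun u v => ?_⟩,
              ⟨hr s, fun u => ?_, fun v => ?_, fun u v => ?_⟩⟩
      · rw [← mul_assoc]; exact hl (u * s)
      · exact hb s v
      · rw [← mul_assoc]; exact hb (u * s) v
      · rw [← mul_assoc]; exact hb u s
      · rw [mul_assoc]; exact hr (s * v)
      · rw [← mul_assoc, mul_assoc]; exact hb u (s * v)
  have hsub : (⋃₀ {J : Set S | J ⊆ (T : Set S) ∧
      ∀ s : S, ∀ j ∈ J, s * j ∈ J ∧ j * s ∈ J})ᶜ ⊆ Iᶜ :=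
    Set.compl_subset_compl.mpr (Set.subset_sUnion_of_mem hImem)
  refine Set.Finite.subset ?_ hsub
  -- the three "bad" sets
  set A : Set S := {x | x ∈ T ∧ ∃ u, u * x ∉ T} with hA
  set B : Set S := {x | x ∈ T ∧ ∃ v, x * v ∉ T} with hB
  set C : Set S := {x | x ∈ T ∧ (∀ u, u * x ∈ T) ∧ (∀ v, x * v ∈ T) ∧
      ∃ p : S × S, p.1 * x * p.2 ∉ T} with hC
  have hAfin : A.Finite := by
    let g : S → S × S := fun x =>
      if h : ∃ u, u * x ∉ T then (h.choose, h.choose * x) else (x, x)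
    apply Set.Finite.of_finite_image (f := g)
    · apply Set.Finite.subset (hfin.prod hfin)
      rintro p ⟨x, ⟨hxT, hx⟩, rfl⟩
      have hu := hx.choose_spec
      simp only [g, dif_pos hx, Set.mem_prod, Set.mem_compl_iff, SetLike.mem_coe]
      exact ⟨fun huT => hu (T.mul_mem huT hxT), hu⟩
    · rintro x ⟨hxT, hx⟩ y ⟨hyT, hy⟩ hxy
      simp only [g, dif_pos hx, dif_pos hy, Prod.mk.injEq] at hxy
      obtain ⟨h1, h2⟩ := hxy
      rw [h1] at h2
      exact mul_left_cancel h2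
  have hBfin : B.Finite := by
    let g : S → S × S := fun x =>
      if h : ∃ v, x * v ∉ T then (h.choose, x * h.choose) else (x, x)
    apply Set.Finite.of_finite_image (f := g)
    · apply Set.Finite.subset (hfin.prod hfin)
      rintro p ⟨x, ⟨hxT, hx⟩, rfl⟩
      have hv := hx.choose_spec
      simp only [g, dif_pos hx, Set.mem_prod, Set.mem_compl_iff, SetLike.mem_coe]
      exact ⟨fun hvT => hv (T.mul_mem hxT hvT), hv⟩
    · rintro x ⟨hxT, hx⟩ y ⟨hyT, hy⟩ hxy
      simp only [g, dif_pos hx, dif_pos hy, Prod.mk.injEq] at hxy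
      obtain ⟨h1, h2⟩ := hxy
      rw [h1] at h2
      exact mul_right_cancel h2
  have hCfin : C.Finite := by
    let g : S → S × S × S := fun x =>
      if h : ∃ p : S × S, p.1 * x * p.2 ∉ T then
        (h.choose.1, h.choose.2, h.choose.1 * x * h.choose.2)
      else (x, x, x)
    apply Set.Finite.of_finite_image (f := g)
    · apply Set.Finite.subset (hfin.prod (hfin.prod hfin))
      rintro p ⟨x, ⟨hxT, hlx, hrx, hx⟩, rfl⟩
      have huv := hx.choose_spec
      simp only [g, dif_pos hx, Set.mem_prod, Set.mem_compl_iff, SetLike.mem_coe]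
      refine ⟨?_, ?_, huv⟩
      · intro huT
        exact huv (by rw [mul_assoc]; exact T.mul_mem huT (hrx _))
      · intro hvT
        exact huv (T.mul_mem (hlx _) hvT)
    · rintro x ⟨hxT, hlx, hrx, hx⟩ y ⟨hyT, hly, hry, hy⟩ hxy
      simp only [g, dif_pos hx, dif_pos hy, Prod.mk.injEq] at hxy
      obtain ⟨h1, h2, h3⟩ := hxy
      rw [h1, h2] at h3
      have h4 := mul_right_cancel h3
      exact mul_left_cancel h4
  have hcover : Iᶜ ⊆ (T : Set S)ᶜ ∪ A ∪ B ∪ C := by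
    intro x hx
    by_cases h1 : x ∈ T
    · by_cases h2 : ∃ u, u * x ∉ T
      · exact Or.inl (Or.inl (Or.inr ⟨h1, h2⟩))
      · by_cases h3 : ∃ v, x * v ∉ T
        · exact Or.inl (Or.inr ⟨h1, h3⟩)
        · push_neg at h2 h3
          refine Or.inr ⟨h1, h2, h3, ?_⟩
          by_contra h4
          push_neg at h4
          exact hx ⟨h1, h2, h3, fun u v => h4 (u, v)⟩
    · exact Or.inl (Or.inl (Or.inl h1))
  exact Set.Finite.subset (((hfin.union hAfin).union hBfin).union hCfin) hcover
end
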